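/- For all integers d ≥ 1, k ≥ 1 and all integers r, s_Y, s_Z with 0 ≤ r ≤ k, 0 ≤ s_Y ≤ k, 0 ≤ s_Z ≤ min(k−r, k−s_Y), setting s := s_Y + s_Z, one has ∫_{(B)^{3k−r−s}} h_1(y_0,…,y_{k−1}) · h_1(y_0,…,y_{r−1}, z_0,…,z_{k−r−1}) · h_1(y_0,…,y_{s_Y−1}, z_0,…,z_{s_Z−1}, w_0,…,w_{k−s−1}) dy dz dw ≤ ( (k+1)(k−r+1)(k−s+1) )^d, where B := [−1,1]^d ⊂ ℝ^d. -/

import Mathlib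

/-!
Drop the two constraints linking the groups: the integrand is then at most the indicator of a
product set, so the integral is bounded by the product of the volumes of the three sets
`{y ∈ [-1,1]^{m×d} : the points y i are pairwise within 1}` with `m = k, k - r, k - s`.
Such a set is, after transposing, the `d`-th power of its one-dimensional analogue, whose volume
is at most `m + 1`: either every point lies in `[0, 1]`, or the smallest one `x j` lies in
`[-1, 0]` and all points lie in `[x j, x j + 1]`, a set of volume `1` for each `j`.
-/

open MeasureTheory

open Classical in
/-- The indicator of a proposition, as a real number. -/
noncomputable def ind (p : Prop) : ℝ := if p then 1 else 0

/-- All points of a set `P ⊆ ℝ^d` (with the sup norm) are pairwise within distance `δ`. -/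
def closeP {d : ℕ} (δ : ℝ) (P : Set (Fin d → ℝ)) : Prop :=
  ∀ a ∈ P, ∀ b ∈ P, ‖a - b‖ ≤ δ

open Set

theorem ind_nonneg (p : Prop) : 0 ≤ ind p := by
  unfold ind; split <;> norm_num

theorem ind_mul_ind (p q : Prop) : ind p * ind q = ind (p ∧ q) := by
  by_cases hp : p <;> by_cases hq : q <;> simp [ind, hp, hq]

theorem ind_mono {p q : Prop} (h : p → q) : ind p ≤ ind q := by
  by_cases hp : p
  · simp [ind, hp, h hp]
  · simpa [ind, hp] using ind_nonneg q

theorem ind_mem_eq_indicator_one {α : Type*} (s : Set α) (x : α) :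
    ind (x ∈ s) = s.indicator 1 x := by
  by_cases hx : x ∈ s <;> simp [ind, hx]

theorem setIntegral_le_measureReal {α : Type*} [MeasurableSpace α] {μ : Measure α}
    {f : α → ℝ} {s t : Set α} (hs : MeasurableSet s) (ht : MeasurableSet t) (hμt : μ t ≠ ⊤)
    (hf₀ : ∀ x ∈ s, 0 ≤ f x) (hf : ∀ x ∈ s, f x ≤ t.indicator 1 x) :
    ∫ x in s, f x ∂μ ≤ μ.real t := by
  have hint : Integrable (t.indicator 1) μ :=
    (integrable_indicator_iff ht).2 (integrableOn_const (C := (1 : ℝ)) hμt)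
  calc ∫ x in s, f x ∂μ ≤ ∫ x in s, t.indicator 1 x ∂μ :=
        integral_mono_of_nonneg (ae_restrict_of_forall_mem hs hf₀) hint.integrableOn
          (ae_restrict_of_forall_mem hs hf)
    _ ≤ ∫ x, t.indicator 1 x ∂μ :=
        setIntegral_le_integral hint (ae_of_all _ (indicator_nonneg fun _ _ => zero_le_one))
    _ = μ.real t := integral_indicator_one ht

theorem closeP.anti {d : ℕ} {δ : ℝ} {P Q : Set (Fin d → ℝ)} (hQ : closeP δ Q) (hPQ : P ⊆ Q) :
    closeP δ P :=
  fun a ha b hb => hQ a (hPQ ha) b (hPQ hb)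

theorem measurePreserving_uncurry_pi {ι κ α : Type*} [Fintype ι] [Fintype κ]
    [MeasurableSpace α] (μ : Measure α) [SigmaFinite μ] :
    MeasurePreserving (MeasurableEquiv.curry ι κ α).symm
      (Measure.pi fun _ : ι => Measure.pi fun _ : κ => μ) (Measure.pi fun _ => μ) := by
  refine ⟨(MeasurableEquiv.curry ι κ α).symm.measurable, (Measure.pi_eq fun s hs => ?_).symm⟩
  have hpre : (MeasurableEquiv.curry ι κ α).symm ⁻¹' univ.pi s
      = univ.pi fun i => univ.pi fun k => s (i, k) := by
    ext y; simp [MeasurableEquiv.coe_curry_symm]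
  rw [MeasurableEquiv.map_apply, hpre, Measure.pi_pi]
  simp_rw [Measure.pi_pi]
  exact (Fintype.prod_prod_type fun p => μ (s p)).symm

theorem measurePreserving_transpose_pi {ι κ α : Type*} [Fintype ι] [Fintype κ]
    [MeasurableSpace α] (μ : Measure α) [SigmaFinite μ] :
    MeasurePreserving (fun (y : ι → κ → α) k i => y i k)
      (Measure.pi fun _ : ι => Measure.pi fun _ : κ => μ)
      (Measure.pi fun _ : κ => Measure.pi fun _ : ι => μ) :=
  ((measurePreserving_uncurry_pi μ).symm.comp
    ((measurePreserving_piCongrLeft (fun _ => μ) (Equiv.prodComm ι κ)).comp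
      (measurePreserving_uncurry_pi μ)) :)

def anchoredCluster {m : ℕ} (j : Fin m) (a c δ : ℝ) : Set (Fin m → ℝ) :=
  {x | x j ∈ Icc a c ∧ ∀ i, x i ∈ Icc (x j) (x j + δ)}

theorem volume_setOf_mem_Icc_forall_mem_Icc (n : ℕ) (a c δ : ℝ) :
    volume {p : ℝ × (Fin n → ℝ) | p.1 ∈ Icc a c ∧ ∀ i, p.2 i ∈ Icc p.1 (p.1 + δ)} =
      ENNReal.ofReal (c - a) * ENNReal.ofReal δ ^ n := by
  set W : Set (ℝ × (Fin n → ℝ)) := {p | p.1 ∈ Icc a c ∧ ∀ i, p.2 i ∈ Icc p.1 (p.1 + δ)}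
  have hW : MeasurableSet W := by
    simp only [W, mem_Icc]
    measurability
  have hslice (t : ℝ) :
      volume (Prod.mk t ⁻¹' W) = (Icc a c).indicator (fun _ => ENNReal.ofReal δ ^ n) t := by
    by_cases ht : t ∈ Icc a c
    · have : Prod.mk t ⁻¹' W = univ.pi fun _ => Icc t (t + δ) := by
        ext y; simp only [W, mem_preimage, mem_ofPred_eq, mem_univ_pi, ht, true_and]
      rw [indicator_of_mem ht, this, volume_pi_pi]
      simp [Real.volume_Icc]
    · have : Prod.mk t ⁻¹' W = ∅ := by
        ext y; simp only [W, mem_preimage, mem_ofPred_eq, ht, false_and, mem_empty_iff_false]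
      rw [indicator_of_notMem ht, this, measure_empty]
  rw [Measure.volume_eq_prod, Measure.prod_apply hW, lintegral_congr hslice,
    lintegral_indicator_const measurableSet_Icc, Real.volume_Icc, mul_comm]

theorem volume_anchoredCluster {n : ℕ} (j : Fin (n + 1)) (a c : ℝ) {δ : ℝ} (hδ : 0 ≤ δ) :
    volume (anchoredCluster j a c δ) = ENNReal.ofReal (c - a) * ENNReal.ofReal δ ^ n := by
  have hpre : anchoredCluster j a c δ = MeasurableEquiv.piFinSuccAbove (fun _ => ℝ) j ⁻¹'
      {p | p.1 ∈ Icc a c ∧ ∀ i, p.2 i ∈ Icc p.1 (p.1 + δ)} := by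
    ext x
    simp only [anchoredCluster, mem_ofPred_eq, mem_preimage, Fin.forall_iff_succAbove j]
    simp [MeasurableEquiv.piFinSuccAbove_apply, Fin.removeNth_apply, hδ]
  rw [hpre, volume_pi,
    (measurePreserving_piFinSuccAbove (fun _ => volume) j).measure_preimage_equiv, ← volume_pi,
    ← Measure.volume_eq_prod, volume_setOf_mem_Icc_forall_mem_Icc]

def intervalCluster (m : ℕ) (a b δ : ℝ) : Set (Fin m → ℝ) :=
  {x | (∀ i, x i ∈ Icc a b) ∧ ∀ i j, |x i - x j| ≤ δ}

theorem intervalCluster_subset (m : ℕ) (a b δ : ℝ) :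
    intervalCluster m a b δ ⊆
      (univ.pi fun _ => Icc (b - δ) b) ∪ ⋃ j, anchoredCluster j a (b - δ) δ := by
  rintro x ⟨hIcc, hclose⟩
  by_cases htop : ∀ i, b - δ ≤ x i
  · exact Or.inl fun i _ => ⟨htop i, (hIcc i).2⟩
  push Not at htop
  obtain ⟨i₀, hi₀⟩ := htop
  have : Nonempty (Fin m) := ⟨i₀⟩
  obtain ⟨j, hj⟩ := Finite.exists_min x
  refine Or.inr (mem_iUnion.2 ⟨j, ⟨(hIcc j).1, (hj i₀).trans hi₀.le⟩, fun i => ⟨hj i, ?_⟩⟩)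
  linarith [(abs_le.1 (hclose i j)).2]

theorem measurableSet_intervalCluster (m : ℕ) (a b δ : ℝ) :
    MeasurableSet (intervalCluster m a b δ) := by
  simp only [intervalCluster, mem_Icc]
  measurability

theorem volume_intervalCluster_le (m : ℕ) (a b : ℝ) {δ : ℝ} (hδ : 0 ≤ δ) :
    volume (intervalCluster m a b δ) ≤
      ENNReal.ofReal δ ^ m + m * (ENNReal.ofReal (b - δ - a) * ENNReal.ofReal δ ^ (m - 1)) := by
  calc volume (intervalCluster m a b δ)
      ≤ volume (univ.pi fun _ : Fin m => Icc (b - δ) b) +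
          ∑ j, volume (anchoredCluster j a (b - δ) δ) :=
        (measure_mono (intervalCluster_subset m a b δ)).trans
          ((measure_union_le _ _).trans (add_le_add_right (measure_iUnion_fintype_le _ _) _))
    _ = _ := by
        rw [volume_pi_pi]
        rcases m with _ | n
        · simp
        · simp only [volume_anchoredCluster _ _ _ hδ, Real.volume_Icc, sub_sub_cancel,
            Finset.prod_const, Finset.sum_const, Finset.card_univ, Fintype.card_fin,
            nsmul_eq_mul, Nat.add_sub_cancel, Nat.cast_succ]

def boxCluster (m d : ℕ) (a b δ : ℝ) : Set (Fin m → Fin d → ℝ) :=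
  {y | y ∈ univ.pi (fun _ => univ.pi fun _ => Icc a b) ∧ closeP δ (range y)}

theorem boxCluster_eq_preimage (m d : ℕ) (a b : ℝ) {δ : ℝ} (hδ : 0 ≤ δ) :
    boxCluster m d a b δ =
      (fun y c i => y i c) ⁻¹' univ.pi fun _ => intervalCluster m a b δ := by
  ext y
  simp only [boxCluster, intervalCluster, closeP, forall_mem_range, mem_preimage, mem_univ_pi,
    mem_ofPred_eq, pi_norm_le_iff_of_nonneg hδ, Pi.sub_apply, Real.norm_eq_abs, forall_and]
  exact and_congr forall_comm ((forall_congr' fun _ => forall_comm).trans forall_comm)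

theorem measurableSet_boxCluster (m d : ℕ) (a b : ℝ) {δ : ℝ} (hδ : 0 ≤ δ) :
    MeasurableSet (boxCluster m d a b δ) := by
  rw [boxCluster_eq_preimage m d a b hδ]
  exact (MeasurableSet.univ_pi fun _ => measurableSet_intervalCluster m a b δ).preimage
    (measurePreserving_transpose_pi volume).measurable

theorem volume_boxCluster (m d : ℕ) (a b : ℝ) {δ : ℝ} (hδ : 0 ≤ δ) :
    volume (boxCluster m d a b δ) = volume (intervalCluster m a b δ) ^ d := by
  rw [boxCluster_eq_preimage m d a b hδ, volume_pi, volume_pi,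
    (measurePreserving_transpose_pi volume).measure_preimage
      (MeasurableSet.univ_pi fun _ => measurableSet_intervalCluster m a b δ).nullMeasurableSet,
    Measure.pi_pi, ← volume_pi, Finset.prod_const, Finset.card_univ, Fintype.card_fin]

theorem volume_boxCluster_unit_le (m d : ℕ) :
    volume (boxCluster m d (-1) 1 1) ≤ ENNReal.ofReal (((m : ℝ) + 1) ^ d) := by
  rw [volume_boxCluster m d (-1) 1 zero_le_one, ENNReal.ofReal_pow (by positivity)]
  gcongr
  refine (volume_intervalCluster_le m (-1) 1 zero_le_one).trans_eq ?_
  rw [ENNReal.ofReal_add (Nat.cast_nonneg m) zero_le_one, ENNReal.ofReal_natCast]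
  norm_num [add_comm]

theorem volume_prod_boxCluster_unit_le (d k m n : ℕ) :
    volume (boxCluster k d (-1) 1 1 ×ˢ (boxCluster m d (-1) 1 1 ×ˢ boxCluster n d (-1) 1 1)) ≤
      ENNReal.ofReal ((((k : ℝ) + 1) * ((m : ℝ) + 1) * ((n : ℝ) + 1)) ^ d) := by
  rw [Measure.volume_eq_prod, Measure.prod_prod, Measure.volume_eq_prod, Measure.prod_prod,
    mul_pow, mul_pow, mul_assoc, ENNReal.ofReal_mul (by positivity),
    ENNReal.ofReal_mul (by positivity)]
  gcongr <;> exact volume_boxCluster_unit_le _ _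

theorem stmt11_general (d k r sY sZ : ℕ)
    (hr : r ≤ k) (hsY : sY ≤ k) (hsZ : sZ ≤ min (k - r) (k - sY)) :
    (∫ p in ((Set.univ.pi fun _ : Fin k =>
                (Set.univ.pi fun _ : Fin d => Set.Icc (-1 : ℝ) 1)) ×ˢ
             ((Set.univ.pi fun _ : Fin (k - r) =>
                (Set.univ.pi fun _ : Fin d => Set.Icc (-1 : ℝ) 1)) ×ˢ
              (Set.univ.pi fun _ : Fin (k - (sY + sZ)) =>
                (Set.univ.pi fun _ : Fin d => Set.Icc (-1 : ℝ) 1)))),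
      ind (closeP 1 (Set.range p.1)) *
      ind (closeP 1 ((p.1 '' {i : Fin k | (i : ℕ) < r}) ∪ Set.range p.2.1)) *
      ind (closeP 1 ((p.1 '' {i : Fin k | (i : ℕ) < sY}) ∪
                     (p.2.1 '' {i : Fin (k - r) | (i : ℕ) < sZ}) ∪ Set.range p.2.2)))
      ≤ (((k : ℝ) + 1) * ((k : ℝ) - (r : ℝ) + 1) *
          ((k : ℝ) - ((sY : ℝ) + (sZ : ℝ)) + 1)) ^ d := by
  have hs : sY + sZ ≤ k := by have := hsZ.trans (min_le_right _ _); omega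
  have hvol := volume_prod_boxCluster_unit_le d k (k - r) (k - (sY + sZ))
  have hC : MeasurableSet (boxCluster k d (-1) 1 1 ×ˢ
      (boxCluster (k - r) d (-1) 1 1 ×ˢ boxCluster (k - (sY + sZ)) d (-1) 1 1)) :=
    (measurableSet_boxCluster _ _ _ _ zero_le_one).prod
      ((measurableSet_boxCluster _ _ _ _ zero_le_one).prod
        (measurableSet_boxCluster _ _ _ _ zero_le_one))
  simp_rw [ind_mul_ind]
  refine (setIntegral_le_measureReal (by measurability) hC (hvol.trans_lt ENNReal.ofReal_lt_top).ne
    (fun _ _ => ind_nonneg _) fun p hp => ?_).trans ?_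
  · rw [← ind_mem_eq_indicator_one]
    exact ind_mono fun ⟨⟨hy, hz⟩, hw⟩ =>
      ⟨⟨hp.1, hy⟩, ⟨hp.2.1, hz.anti subset_union_right⟩, ⟨hp.2.2, hw.anti subset_union_right⟩⟩
  · refine (ENNReal.toReal_le_of_le_ofReal (by positivity) hvol).trans_eq ?_
    rw [Nat.cast_sub hr, Nat.cast_sub hs, Nat.cast_add]

/-- For all integers `d ≥ 1`, `k ≥ 1`, `0 ≤ r ≤ k`, `0 ≤ s_Y ≤ k`,
`0 ≤ s_Z ≤ min(k−r, k−s_Y)`, with `s := s_Y + s_Z`,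
`∫_{(B)^{3k−r−s}} h_1(y) · h_1(y_{<r}, z) · h_1(y_{<s_Y}, z_{<s_Z}, w) dy dz dw
  ≤ ((k+1)(k−r+1)(k−s+1))^d`, where `B = [−1,1]^d ⊂ ℝ^d` with the `ℓ^∞` norm. -/
theorem stmt11 (d k r sY sZ : ℕ) (hd : 1 ≤ d) (hk : 1 ≤ k)
    (hr : r ≤ k) (hsY : sY ≤ k) (hsZ : sZ ≤ min (k - r) (k - sY)) :
    (∫ p in ((Set.univ.pi fun _ : Fin k =>
                (Set.univ.pi fun _ : Fin d => Set.Icc (-1 : ℝ) 1)) ×ˢ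
             ((Set.univ.pi fun _ : Fin (k - r) =>
                (Set.univ.pi fun _ : Fin d => Set.Icc (-1 : ℝ) 1)) ×ˢ
              (Set.univ.pi fun _ : Fin (k - (sY + sZ)) =>
                (Set.univ.pi fun _ : Fin d => Set.Icc (-1 : ℝ) 1)))),
      ind (closeP 1 (Set.range p.1)) *
      ind (closeP 1 ((p.1 '' {i : Fin k | (i : ℕ) < r}) ∪ Set.range p.2.1)) *
      ind (closeP 1 ((p.1 '' {i : Fin k | (i : ℕ) < sY}) ∪
                     (p.2.1 '' {i : Fin (k - r) | (i : ℕ) < sZ}) ∪ Set.range p.2.2)))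
      ≤ (((k : ℝ) + 1) * ((k : ℝ) - (r : ℝ) + 1) *
          ((k : ℝ) - ((sY : ℝ) + (sZ : ℝ)) + 1)) ^ d :=
  stmt11_general d k r sY sZ hr hsY hsZ
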